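/- arXiv:math/0702478 — 3 statements merged into one kernel-verified Lean document; each statement's English description precedes it below -/
import Mathlib

section
/- Let K be an infinite field, fix ℓ ≥ 1 and distinct pairs (p_k, q_k), and let γ ∈ K with γ ≠ 0. Define the polynomials P(x,y) = −∑_{k=1}^{ℓ} a_k x^{p_k+1} y^{q_k} and Q(x,y) = ∑_{k=1}^{ℓ} b_k x^{q_k} y^{p_k+1}. Then the two identities γ·Q(γ·y, x/γ) = −P(x,y) and γ·Q(x,y) = −P(γ·y, x/γ) hold for all x, y ∈ K if and only if b_k = γ^{p_k − q_k} · a_k for all k = 1,…,ℓ. -/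
open MvPolynomial

noncomputable section

/-- Index in `Fin (2*ℓ)` of the coefficient `a_k` (0-indexed position `k`). -/
def aIdx (l : ℕ) (k : Fin l) : Fin (2 * l) :=
  ⟨(k : ℕ), by have := k.isLt; omega⟩

/-- Index in `Fin (2*ℓ)` of the coefficient `b_k` (0-indexed position `2ℓ-1-k`),
    matching the ordering `(a₁,…,a_ℓ, b_ℓ,…,b₁)`. -/
def bIdx (l : ℕ) (k : Fin l) : Fin (2 * l) :=
  ⟨2 * l - 1 - (k : ℕ), by have := k.isLt; omega⟩

/-- The vector `ζ = (p₁−q₁, …, p_ℓ−q_ℓ, q_ℓ−p_ℓ, …, q₁−p₁)`. -/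
def zeta {l : ℕ} (p : Fin l → ℤ) (q : Fin l → ℕ) : Fin (2 * l) → ℤ := fun i =>
  if h : (i : ℕ) < l then p ⟨(i : ℕ), h⟩ - (q ⟨(i : ℕ), h⟩ : ℤ)
  else (q ⟨2 * l - 1 - (i : ℕ), by have := i.isLt; omega⟩ : ℤ) -
    p ⟨2 * l - 1 - (i : ℕ), by have := i.isLt; omega⟩

/-- Dot product of an integer vector with a vector of natural numbers. -/
def zdot {n : ℕ} (z : Fin n → ℤ) (v : Fin n → ℕ) : ℤ := ∑ i, z i * (v i : ℤ)

/-- Reversal (involution) of a vector: `ν̂ = (ν_{2ℓ}, …, ν₁)`. -/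
def revVec {n : ℕ} {α : Type*} (v : Fin n → α) : Fin n → α := fun i => v i.rev

/-- The monomial `[ν] = a₁^{ν₁}⋯a_ℓ^{ν_ℓ}·b_ℓ^{ν_{ℓ+1}}⋯b₁^{ν_{2ℓ}}` in the
    polynomial ring in `2ℓ` variables. -/
def monX {K : Type*} [CommSemiring K] {n : ℕ} (v : Fin n → ℕ) :
    MvPolynomial (Fin n) K :=
  ∏ i, (X i) ^ (v i)

/-- Time-reversibility of the coefficient vector `x = (a,b)`: there is `γ ≠ 0`
    with `b_k = γ^{p_k−q_k}·a_k` for all `k`. -/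
def TimeRev {K : Type*} [Field K] {l : ℕ} (p : Fin l → ℤ) (q : Fin l → ℕ)
    (x : Fin (2 * l) → K) : Prop :=
  ∃ γ : K, γ ≠ 0 ∧ ∀ k : Fin l, x (bIdx l k) = γ ^ (p k - (q k : ℤ)) * x (aIdx l k)

/-- The Sibirsky ideal `I_S = ⟨[ν] − [ν̂] : ν ∈ M⟩`. -/
def sibirsky (K : Type*) [CommRing K] {l : ℕ} (p : Fin l → ℤ) (q : Fin l → ℕ) :
    Ideal (MvPolynomial (Fin (2 * l)) K) :=
  Ideal.span {f | ∃ v : Fin (2 * l) → ℕ,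
    zdot (zeta p q) v = 0 ∧ f = monX v - monX (revVec v)}

/-- The homomorphism `ψ₀ : K[a₁,…,a_ℓ,b_ℓ,…,b₁] → K(γ,t₁,…,t_ℓ)`,
    `a_k ↦ t_k`, `b_k ↦ γ^{p_k−q_k}·t_k`; here `γ` is the image of `X 0` and
    `t_k` the image of `X k.succ` in the fraction field of `K[X₀,…,X_ℓ]`. -/
def psi0 {K : Type*} [Field K] {l : ℕ} (p : Fin l → ℤ) (q : Fin l → ℕ) :
    MvPolynomial (Fin (2 * l)) K →ₐ[K] FractionRing (MvPolynomial (Fin (l + 1)) K) :=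
  aeval fun i =>
    if h : (i : ℕ) < l then
      algebraMap (MvPolynomial (Fin (l + 1)) K)
        (FractionRing (MvPolynomial (Fin (l + 1)) K)) (X (Fin.succ ⟨(i : ℕ), h⟩))
    else
      (algebraMap (MvPolynomial (Fin (l + 1)) K)
          (FractionRing (MvPolynomial (Fin (l + 1)) K)) (X 0)) ^
        (p ⟨2 * l - 1 - (i : ℕ), by have := i.isLt; omega⟩ -
          (q ⟨2 * l - 1 - (i : ℕ), by have := i.isLt; omega⟩ : ℤ)) *
      algebraMap (MvPolynomial (Fin (l + 1)) K)
        (FractionRing (MvPolynomial (Fin (l + 1)) K))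
        (X (Fin.succ ⟨2 * l - 1 - (i : ℕ), by have := i.isLt; omega⟩))

/-- The linear map `U_η`, multiplying the coordinate `a_k` by `η^{q_k−p_k}` and the
    coordinate `b_k` by `η^{p_k−q_k}`. -/
def Ueta {K : Type*} [Field K] {l : ℕ} (p : Fin l → ℤ) (q : Fin l → ℕ) (η : K)
    (x : Fin (2 * l) → K) : Fin (2 * l) → K := fun i =>
  if h : (i : ℕ) < l then η ^ ((q ⟨(i : ℕ), h⟩ : ℤ) - p ⟨(i : ℕ), h⟩) * x i
  else η ^ (p ⟨2 * l - 1 - (i : ℕ), by have := i.isLt; omega⟩ -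
    (q ⟨2 * l - 1 - (i : ℕ), by have := i.isLt; omega⟩ : ℤ)) * x i

/-- The orbit of `x` under the group `{U_η : η ≠ 0}`. -/
def orbitU {K : Type*} [Field K] {l : ℕ} (p : Fin l → ℤ) (q : Fin l → ℕ)
    (x : Fin (2 * l) → K) : Set (Fin (2 * l) → K) :=
  {y | ∃ η : K, η ≠ 0 ∧ y = Ueta p q η x}

/-!
On an infinite field a polynomial function of two variables determines its coefficients. The
exponent pairs `(p_k + 1, q_k)` are distinct, so after the substitution `(x, y) ↦ (γ y, x / γ)`
each of the two identities becomes a coefficientwise comparison, and both reduce to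
`b_k = γ ^ (p_k - q_k) * a_k`.
-/

section
variable {R ι : Type*} [CommRing R] (m n : ι → ℕ)

def bivariateExponent (k : ι) : Fin 2 →₀ ℕ := Finsupp.single 0 (m k) + Finsupp.single 1 (n k)

lemma bivariateExponent_injective (hmn : Function.Injective fun k => (m k, n k)) :
    Function.Injective (bivariateExponent m n) := by
  intro j k hjk
  apply hmn
  have h0 : m j = m k := by simpa [bivariateExponent] using DFunLike.congr_fun hjk 0
  have h1 : n j = n k := by simpa [bivariateExponent] using DFunLike.congr_fun hjk 1
  exact Prod.ext h0 h1

lemma eval_sum_monomial_bivariateExponent [Fintype ι] (c : ι → R) (z : Fin 2 → R) :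
    eval z (∑ k, monomial (bivariateExponent m n k) (c k)) =
      ∑ k, c k * z 0 ^ m k * z 1 ^ n k := by
  simp [bivariateExponent, eval_monomial, Finsupp.prod_add_index, pow_add, mul_assoc,
      Finsupp.prod_single_index]

lemma coeff_sum_monomial_bivariateExponent [Fintype ι]
    (hmn : Function.Injective fun k => (m k, n k)) (c : ι → R) (k : ι) :
    coeff (bivariateExponent m n k) (∑ j, monomial (bivariateExponent m n j) (c j)) = c k := by
  classical
  rw [coeff_sum, Finset.sum_eq_single k]
  · simp
  · intro j _ hjk
    rw [coeff_monomial, if_neg ((bivariateExponent_injective m n hmn).ne hjk)]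
  · simp

variable {m n}

lemma forall_sum_mul_pow_mul_pow_eq_iff [Fintype ι] [IsDomain R] [Infinite R]
    (hmn : Function.Injective fun k => (m k, n k)) (c d : ι → R) :
    (∀ x y : R, ∑ k, c k * x ^ m k * y ^ n k = ∑ k, d k * x ^ m k * y ^ n k) ↔ c = d := by
  refine ⟨fun h => ?_, fun h => h ▸ fun _ _ => rfl⟩
  have hpoly : ∑ k, monomial (bivariateExponent m n k) (c k) =
      ∑ k, monomial (bivariateExponent m n k) (d k) :=
    MvPolynomial.funext fun z => by
      simpa only [eval_sum_monomial_bivariateExponent] using h (z 0) (z 1)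
  funext k
  simpa only [coeff_sum_monomial_bivariateExponent m n hmn] using
    congrArg (coeff (bivariateExponent m n k)) hpoly
end

lemma mul_pow_mul_div_pow {K : Type*} [Field K] {γ : K} (hγ : γ ≠ 0) (x y : K) (m n : ℕ) :
    (γ * y) ^ n * (x / γ) ^ m = γ ^ ((n : ℤ) - m) * x ^ m * y ^ n := by
  rw [mul_pow, div_pow, zpow_sub₀ hγ, zpow_natCast, zpow_natCast]
  field_simp

section
variable {K ι : Type*} [Field K] [Infinite K] [Fintype ι] {m n : ι → ℕ} {γ : K}

lemma mul_sum_twistedSwap_eq_sum_iff (hmn : Function.Injective fun k => (m k, n k))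
    (hγ : γ ≠ 0) (a b : ι → K) :
    (∀ x y : K, γ * ∑ k, b k * (γ * y) ^ n k * (x / γ) ^ m k =
        ∑ k, a k * x ^ m k * y ^ n k) ↔
      ∀ k, b k = γ ^ ((m k : ℤ) - 1 - n k) * a k := by
  have hlhs : ∀ x y : K, γ * ∑ k, b k * (γ * y) ^ n k * (x / γ) ^ m k =
      ∑ k, (γ ^ ((m k : ℤ) - 1 - n k))⁻¹ * b k * x ^ m k * y ^ n k := by
    intro x y
    rw [Finset.mul_sum]
    refine Finset.sum_congr rfl fun k _ => ?_
    have hexp : -((m k : ℤ) - 1 - n k) = 1 + ((n k : ℤ) - m k) := by ring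
    rw [mul_assoc (b k), mul_pow_mul_div_pow hγ, ← zpow_neg, hexp, zpow_one_add₀ hγ]
    ring
  simp only [hlhs]
  refine (forall_sum_mul_pow_mul_pow_eq_iff hmn _ a).trans (funext_iff.trans ?_)
  exact forall_congr' fun k => inv_mul_eq_iff_eq_mul₀ (zpow_ne_zero _ hγ)

lemma mul_sum_eq_sum_twistedSwap_iff (hnm : Function.Injective fun k => (n k, m k))
    (hγ : γ ≠ 0) (a b : ι → K) :
    (∀ x y : K, γ * ∑ k, b k * x ^ n k * y ^ m k =
        ∑ k, a k * (γ * y) ^ m k * (x / γ) ^ n k) ↔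
      ∀ k, b k = γ ^ ((m k : ℤ) - 1 - n k) * a k := by
  have hrhs : ∀ x y : K, ∑ k, a k * (γ * y) ^ m k * (x / γ) ^ n k =
      ∑ k, γ * (γ ^ ((m k : ℤ) - 1 - n k) * a k) * x ^ n k * y ^ m k := by
    intro x y
    refine Finset.sum_congr rfl fun k _ => ?_
    rw [mul_assoc (a k), mul_pow_mul_div_pow hγ, ← mul_assoc γ, ← zpow_one_add₀ hγ]
    ring_nf
  simp only [hrhs, Finset.mul_sum, ← mul_assoc]
  refine (forall_sum_mul_pow_mul_pow_eq_iff hnm _ _).trans (funext_iff.trans ?_)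
  exact forall_congr' fun k => by rw [mul_assoc]; exact mul_right_inj' hγ
end

theorem stmt0_general {K : Type*} [Field K] [Infinite K] {l : ℕ} (p : Fin l → ℤ) (q : Fin l → ℕ)
    (hp : ∀ k, -1 ≤ p k)
    (hdist : Function.Injective fun k => (p k, q k))
    (a b : Fin l → K) (γ : K) (hγ : γ ≠ 0) (P Q : K → K → K)
    (hP : ∀ x y : K, P x y = -∑ k, a k * x ^ (p k + 1).toNat * y ^ (q k))
    (hQ : ∀ x y : K, Q x y = ∑ k, b k * x ^ (q k) * y ^ (p k + 1).toNat) :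
    ((∀ x y : K, γ * Q (γ * y) (x / γ) = -(P x y)) ∧
      (∀ x y : K, γ * Q x y = -(P (γ * y) (x / γ)))) ↔
      ∀ k, b k = γ ^ (p k - (q k : ℤ)) * a k := by
  have hm : ∀ k, ((p k + 1).toNat : ℤ) = p k + 1 := fun k =>
    Int.toNat_of_nonneg (by linarith [hp k])
  have hmq : Function.Injective fun k => ((p k + 1).toNat, q k) := fun j k hjk => hdist <| by
    simp only [Prod.mk.injEq] at hjk ⊢
    exact ⟨by linarith [hm j, hm k, congrArg (Nat.cast : ℕ → ℤ) hjk.1], hjk.2⟩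
  have hexp : ∀ k, p k - (q k : ℤ) = ((p k + 1).toNat : ℤ) - 1 - q k := fun k => by
    rw [hm k]; ring
  simp only [hP, hQ, neg_neg, hexp]
  exact (and_congr (mul_sum_twistedSwap_eq_sum_iff hmq hγ a b)
    (mul_sum_eq_sum_twistedSwap_iff (fun j k hjk => hmq (congrArg Prod.swap hjk)) hγ a b)).trans
    and_self_iff

theorem stmt0 {K : Type*} [Field K] [Infinite K] {l : ℕ} (hl : 0 < l) (p : Fin l → ℤ) (q : Fin l → ℕ)
    (hp : ∀ k, -1 ≤ p k) (hpq : ∀ k, 0 ≤ p k + (q k : ℤ))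
    (hdist : Function.Injective fun k => (p k, q k))
    (a b : Fin l → K) (γ : K) (hγ : γ ≠ 0) (P Q : K → K → K)
    (hP : ∀ x y : K, P x y = -∑ k, a k * x ^ (p k + 1).toNat * y ^ (q k))
    (hQ : ∀ x y : K, Q x y = ∑ k, b k * x ^ (q k) * y ^ (p k + 1).toNat) :
    ((∀ x y : K, γ * Q (γ * y) (x / γ) = -(P x y)) ∧
      (∀ x y : K, γ * Q x y = -(P (γ * y) (x / γ)))) ↔
      ∀ k, b k = γ ^ (p k - (q k : ℤ)) * a k :=
  stmt0_general p q hp hdist a b γ hγ P Q hP hQ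
end
end

section
/- Assume there exists k₀ ∈ {1,…,ℓ} with p_{k₀} ≠ q_{k₀}. Then the inclusion R ⊆ V(I_S) is strict: the point of ℂ^{2ℓ} whose coordinate b_{k₀} equals 1 and all of whose other coordinates equal 0 belongs to V(I_S) but is not time-reversible; in particular R ⊊ V(I_S). -/
open MvPolynomial

noncomputable section

/-! If `b_k = γ^{p_k - q_k} a_k` for all `k`, then `[ν̂](x) = γ^{ζ·ν} [ν](x)`, so time-reversible
systems lie in `V(I_S)`. At the point `e`, a monomial `[ν]` with `ν ∈ M`, `ν ≠ 0` vanishes: it could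
only survive if `ν` were supported on the coordinate `b_{k₀}`, and then
`ζ·ν = (q_{k₀} - p_{k₀}) ν_{b_{k₀}} ≠ 0`. As `M` is closed under reversal, `[ν̂](e)` vanishes too.
Yet `e` is not time-reversible, because `a_{k₀} = 0 ≠ b_{k₀}`. -/

theorem Finset.prod_zpow_eq_zpow_sum {ι G : Type*} [CommGroupWithZero G] {a : G} (ha : a ≠ 0)
    (s : Finset ι) (c : ι → ℤ) : ∏ i ∈ s, a ^ c i = a ^ ∑ i ∈ s, c i := by
  classical
  induction s using Finset.induction with
  | empty => simp
  | insert _ _ h ih => rw [prod_insert h, sum_insert h, zpow_add₀ ha, ih]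

section Monomials

variable {R : Type*} [CommSemiring R] {n : ℕ}

theorem eval_monX (x : Fin n → R) (v : Fin n → ℕ) : eval x (monX v) = ∏ i, x i ^ v i := by
  simp [monX]

theorem eval_monX_revVec (x : Fin n → R) (v : Fin n → ℕ) :
    eval x (monX (revVec v)) = ∏ i, x i.rev ^ v i := by
  rw [eval_monX]
  exact Fintype.prod_equiv Fin.revPerm _ _ fun i => by simp [revVec]

theorem eval_monX_eq_zero {x : Fin n → R} {v : Fin n → ℕ} {i : Fin n} (hx : x i = 0)
    (hv : v i ≠ 0) :
    eval x (monX v) = 0 := by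
  rw [eval_monX]
  exact Finset.prod_eq_zero (Finset.mem_univ i) (by rw [hx, zero_pow hv])

end Monomials

theorem revVec_ne_zero {n : ℕ} {v : Fin n → ℕ} (hv : v ≠ 0) : revVec v ≠ 0 := by
  contrapose! hv
  funext i
  simpa [revVec] using congrFun hv i.rev

theorem exists_ne_and_ne_zero_of_zdot_eq_zero {n : ℕ} {z : Fin n → ℤ} {v : Fin n → ℕ}
    (hv : zdot z v = 0) (hv0 : v ≠ 0) {i₀ : Fin n} (hz : z i₀ ≠ 0) : ∃ i ≠ i₀, v i ≠ 0 := by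
  by_contra! hsupp
  have hdot : zdot z v = z i₀ * v i₀ :=
    Finset.sum_eq_single i₀ (fun i _ hi => by simp [hsupp i hi]) (by simp)
  have hvi₀ : v i₀ = 0 := by
    rw [hv] at hdot
    exact_mod_cast (mul_eq_zero.mp hdot.symm).resolve_left hz
  exact hv0 (funext fun i => if hi : i = i₀ then hi ▸ hvi₀ else hsupp i hi)

section Indices

variable {l : ℕ}

theorem exists_eq_aIdx_or_exists_eq_bIdx (i : Fin (2 * l)) :
    (∃ k, i = aIdx l k) ∨ ∃ k, i = bIdx l k := by
  by_cases h : (i : ℕ) < l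
  · exact .inl ⟨⟨i, h⟩, rfl⟩
  · refine .inr ⟨⟨2 * l - 1 - i, by omega⟩, ?_⟩
    ext
    simp only [bIdx]
    omega

theorem rev_bIdx (k : Fin l) : (bIdx l k).rev = aIdx l k := by
  ext
  simp only [Fin.val_rev, bIdx, aIdx]
  omega

theorem rev_aIdx (k : Fin l) : (aIdx l k).rev = bIdx l k := by
  rw [← rev_bIdx, Fin.rev_rev]

theorem aIdx_ne_bIdx (k : Fin l) : aIdx l k ≠ bIdx l k := by
  intro h
  have := congrArg Fin.val h
  simp only [aIdx, bIdx] at this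
  omega

variable (p : Fin l → ℤ) (q : Fin l → ℕ)

theorem zeta_aIdx (k : Fin l) : zeta p q (aIdx l k) = p k - q k := by
  simp [zeta, aIdx]

theorem zeta_bIdx (k : Fin l) : zeta p q (bIdx l k) = q k - p k := by
  have hb : ¬ ((bIdx l k : ℕ) < l) := by simp only [bIdx]; omega
  have hk : 2 * l - 1 - (bIdx l k : ℕ) = k := by simp only [bIdx]; omega
  simp only [zeta, dif_neg hb, hk]

theorem zeta_rev (i : Fin (2 * l)) : zeta p q i.rev = -zeta p q i := by
  rcases exists_eq_aIdx_or_exists_eq_bIdx i with ⟨k, rfl⟩ | ⟨k, rfl⟩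
  · rw [rev_aIdx, zeta_aIdx, zeta_bIdx, neg_sub]
  · rw [rev_bIdx, zeta_aIdx, zeta_bIdx, neg_sub]

theorem zdot_zeta_revVec (v : Fin (2 * l) → ℕ) :
    zdot (zeta p q) (revVec v) = -zdot (zeta p q) v := by
  rw [zdot, zdot, ← Finset.sum_neg_distrib]
  exact Fintype.sum_equiv Fin.revPerm _ _ fun i => by simp [revVec, zeta_rev]

end Indices

section Sibirsky

variable {l : ℕ} (p : Fin l → ℤ) (q : Fin l → ℕ)

theorem eval_eq_zero_of_mem_sibirsky {K : Type*} [CommRing K] {x : Fin (2 * l) → K}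
    (hx : ∀ v, zdot (zeta p q) v = 0 → eval x (monX v) = eval x (monX (revVec v))) :
    ∀ f ∈ sibirsky K p q, eval x f = 0 := by
  have hle : sibirsky K p q ≤ RingHom.ker (eval x) := by
    rw [sibirsky, Ideal.span_le]
    rintro f ⟨v, hv, rfl⟩
    simp [RingHom.mem_ker, hx v hv]
  exact fun f hf => hle hf

theorem apply_rev_eq_zpow_zeta_mul {K : Type*} [Field K] {x : Fin (2 * l) → K} {γ : K}
    (hγ : γ ≠ 0) (hx : ∀ k, x (bIdx l k) = γ ^ (p k - (q k : ℤ)) * x (aIdx l k)) (i : Fin (2 * l)) :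
    x i.rev = γ ^ zeta p q i * x i := by
  rcases exists_eq_aIdx_or_exists_eq_bIdx i with ⟨k, rfl⟩ | ⟨k, rfl⟩
  · rw [rev_aIdx, hx, zeta_aIdx]
  · rw [rev_bIdx, zeta_bIdx, hx, ← mul_assoc, ← zpow_add₀ hγ, ← neg_sub, neg_add_cancel,
      zpow_zero, one_mul]

theorem TimeRev.eval_eq_zero_of_mem_sibirsky {K : Type*} [Field K] {x : Fin (2 * l) → K}
    (hx : TimeRev p q x) : ∀ f ∈ sibirsky K p q, eval x f = 0 := by
  obtain ⟨γ, hγ, hxγ⟩ := hx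
  refine _root_.eval_eq_zero_of_mem_sibirsky p q fun v hv => ?_
  have hfactor (i : Fin (2 * l)) : x i.rev ^ v i = γ ^ (zeta p q i * v i) * x i ^ v i := by
    rw [apply_rev_eq_zpow_zeta_mul p q hγ hxγ, mul_pow, zpow_mul, zpow_natCast]
  calc eval x (monX v) = γ ^ zdot (zeta p q) v * ∏ i, x i ^ v i := by
        rw [hv, zpow_zero, one_mul, eval_monX]
    _ = eval x (monX (revVec v)) := by
        simp only [eval_monX_revVec, hfactor, Finset.prod_mul_distrib,
          Finset.prod_zpow_eq_zpow_sum hγ, zdot]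

theorem eval_eq_zero_of_mem_sibirsky_of_eq_zero_of_ne {K : Type*} [CommRing K]
    {x : Fin (2 * l) → K} {i₀ : Fin (2 * l)} (hz : zeta p q i₀ ≠ 0)
    (hx : ∀ i ≠ i₀, x i = 0) : ∀ f ∈ sibirsky K p q, eval x f = 0 := by
  refine eval_eq_zero_of_mem_sibirsky p q fun v hv => ?_
  rcases eq_or_ne v 0 with rfl | hv0
  · rfl
  obtain ⟨i, hi, hvi⟩ := exists_ne_and_ne_zero_of_zdot_eq_zero hv hv0 hz
  obtain ⟨j, hj, hvj⟩ := exists_ne_and_ne_zero_of_zdot_eq_zero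
    (by rw [zdot_zeta_revVec, hv, neg_zero]) (revVec_ne_zero hv0) hz
  rw [eval_monX_eq_zero (hx i hi) hvi, eval_monX_eq_zero (hx j hj) hvj]

theorem not_timeRev_of_apply_aIdx_eq_zero {K : Type*} [Field K] {x : Fin (2 * l) → K}
    {k : Fin l} (ha : x (aIdx l k) = 0) (hb : x (bIdx l k) ≠ 0) : ¬ TimeRev p q x := by
  rintro ⟨γ, -, hxγ⟩
  exact hb (by rw [hxγ, ha, mul_zero])

end Sibirsky

theorem stmt4_general {l : ℕ} (p : Fin l → ℤ) (q : Fin l → ℕ)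
    (k₀ : Fin l) (hk₀ : p k₀ ≠ (q k₀ : ℤ))
    (e : Fin (2 * l) → ℂ) (he : e = fun i => if i = bIdx l k₀ then 1 else 0) :
    e ∈ {x : Fin (2 * l) → ℂ | ∀ f ∈ sibirsky ℂ p q, eval x f = 0} ∧
    ¬ TimeRev p q e ∧
    {x : Fin (2 * l) → ℂ | TimeRev p q x} ⊂
      {x : Fin (2 * l) → ℂ | ∀ f ∈ sibirsky ℂ p q, eval x f = 0} := by
  have hz : zeta p q (bIdx l k₀) ≠ 0 := by
    rw [zeta_bIdx]
    exact sub_ne_zero.mpr hk₀.symm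
  have hmem : ∀ f ∈ sibirsky ℂ p q, eval e f = 0 :=
    eval_eq_zero_of_mem_sibirsky_of_eq_zero_of_ne p q hz fun i hi => by simp [he, hi]
  have hnot : ¬ TimeRev p q e :=
    not_timeRev_of_apply_aIdx_eq_zero p q (k := k₀) (by simp [he, aIdx_ne_bIdx]) (by simp [he])
  exact ⟨hmem, hnot, fun x hx => hx.eval_eq_zero_of_mem_sibirsky, fun h => hnot (h hmem)⟩

theorem stmt4 {l : ℕ} (hl : 0 < l) (p : Fin l → ℤ) (q : Fin l → ℕ)
    (hp : ∀ k, -1 ≤ p k) (hpq : ∀ k, 0 ≤ p k + (q k : ℤ))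
    (hdist : Function.Injective fun k => (p k, q k))
    (k₀ : Fin l) (hk₀ : p k₀ ≠ (q k₀ : ℤ))
    (e : Fin (2 * l) → ℂ) (he : e = fun i => if i = bIdx l k₀ then 1 else 0) :
    e ∈ {x : Fin (2 * l) → ℂ | ∀ f ∈ sibirsky ℂ p q, eval x f = 0} ∧
    ¬ TimeRev p q e ∧
    {x : Fin (2 * l) → ℂ | TimeRev p q x} ⊂
      {x : Fin (2 * l) → ℂ | ∀ f ∈ sibirsky ℂ p q, eval x f = 0} :=
  stmt4_general p q k₀ hk₀ e he
end
end

section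
/- Let K be a field. For every α ∈ M one has ψ₀([α] − [α̂]) = 0; consequently I_S ⊆ ker ψ₀. -/
open MvPolynomial

noncomputable section

lemma prod_zpow_sum₀ {K : Type*} [Field K] {γ : K} (hγ : γ ≠ 0) {ι : Type*}
    (s : Finset ι) (z : ι → ℤ) : ∏ i ∈ s, γ ^ z i = γ ^ ∑ i ∈ s, z i := by
  induction s using Finset.cons_induction with
  | empty => simp
  | cons a s ha ih => rw [Finset.prod_cons, Finset.sum_cons, ih, zpow_add₀ hγ]

theorem stmt7 {K : Type*} [Field K] {l : ℕ} (hl : 0 < l) (p : Fin l → ℤ) (q : Fin l → ℕ)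
    (hp : ∀ k, -1 ≤ p k) (hpq : ∀ k, 0 ≤ p k + (q k : ℤ))
    (hdist : Function.Injective fun k => (p k, q k)) :
    (∀ α : Fin (2 * l) → ℕ, zdot (zeta p q) α = 0 →
      psi0 (K := K) p q (monX α - monX (revVec α)) = 0) ∧
    sibirsky K p q ≤ RingHom.ker (psi0 (K := K) p q).toRingHom := by
  classical
  set A := FractionRing (MvPolynomial (Fin (l + 1)) K) with hA
  set φ := algebraMap (MvPolynomial (Fin (l + 1)) K) A with hφ
  set γ : A := φ (X 0) with hγdef
  have hγ : γ ≠ 0 := by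
    intro h
    exact MvPolynomial.X_ne_zero (R := K) (σ := Fin (l+1)) 0
      (IsFractionRing.injective (MvPolynomial (Fin (l + 1)) K) A
        (by rw [← hγdef, h, map_zero]))
  set F : Fin (2 * l) → A := fun i => psi0 (K := K) p q (X i) with hFdef
  have hF : ∀ v : Fin (2 * l) → ℕ,
      psi0 (K := K) p q (monX v) = ∏ i, (F i) ^ v i := by
    intro v
    rw [monX, map_prod]
    simp only [map_pow, hFdef]
  have key : ∀ i : Fin (2 * l), F i.rev = F i * γ ^ (zeta p q i) := by
    intro i
    have hrev : (i.rev : ℕ) = 2 * l - 1 - (i : ℕ) := by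
      rw [Fin.val_rev]; omega
    have hlt := i.isLt
    by_cases h : (i : ℕ) < l
    · have h2 : ¬ ((i.rev : ℕ) < l) := by omega
      have e1 : 2 * l - 1 - (i.rev : ℕ) = (i : ℕ) := by omega
      simp only [hFdef, psi0, aeval_X, dif_neg h2, zeta, dif_pos h]
      have ep : (⟨2 * l - 1 - (i.rev : ℕ), by omega⟩ : Fin l) = ⟨(i : ℕ), h⟩ :=
        Fin.ext e1
      rw [ep, mul_comm]
    · have h2 : (i.rev : ℕ) < l := by omega
      have e1 : 2 * l - 1 - (i : ℕ) = (i.rev : ℕ) := by omega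
      simp only [hFdef, psi0, aeval_X, dif_pos h2, zeta, dif_neg h]
      have ep : (⟨2 * l - 1 - (i : ℕ), by omega⟩ : Fin l) = ⟨(i.rev : ℕ), h2⟩ :=
        Fin.ext e1
      rw [ep, mul_comm (_ ^ _), mul_assoc, ← zpow_add₀ hγ]
      rw [show (p ⟨(i.rev : ℕ), h2⟩ - (q ⟨(i.rev : ℕ), h2⟩ : ℤ)) +
        ((q ⟨(i.rev : ℕ), h2⟩ : ℤ) - p ⟨(i.rev : ℕ), h2⟩) = 0 by ring]
      rw [zpow_zero, mul_one]
  have main : ∀ α : Fin (2 * l) → ℕ, zdot (zeta p q) α = 0 →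
      psi0 (K := K) p q (monX α - monX (revVec α)) = 0 := by
    intro α hα
    rw [map_sub, sub_eq_zero, hF, hF]
    have step1 : ∏ i, (F i) ^ (revVec α) i = ∏ i, (F i.rev) ^ α i := by
      refine (Fintype.prod_equiv Fin.revPerm _ _ ?_).symm
      intro x
      simp [revVec, Fin.rev_rev, Fin.revPerm]
    rw [step1]
    have step2 : ∀ i : Fin (2 * l),
        (F i.rev) ^ α i = (F i) ^ α i * γ ^ (zeta p q i * (α i : ℤ)) := by
      intro i
      rw [key i, mul_pow, zpow_mul, ← zpow_natCast (γ ^ zeta p q i) (α i)]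
    simp only [step2]
    rw [Finset.prod_mul_distrib, prod_zpow_sum₀ hγ]
    rw [show ∑ i, zeta p q i * (α i : ℤ) = zdot (zeta p q) α from rfl, hα,
      zpow_zero, mul_one]
  refine ⟨main, ?_⟩
  rw [sibirsky, Ideal.span_le]
  rintro f ⟨v, hv, rfl⟩
  exact main v hv
end
end
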